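/- Let A ∈ ℝ^{n×n} with ‖A‖ > 0, b ∈ ℝ^n, U ⊆ ℝ^m ⊆ ℝ^n a compact convex set, X₀ ⊆ ℝ^n compact convex, and τ > 0. For any measurable u : [0,τ] → U and any x₀ ∈ X₀, the solution x(τ) of ẋ = Ax + b + u(t), x(0) = x₀, satisfies x(τ) ∈ e^{Aτ}X₀ ⊕ {G(A,τ)b} ⊕ τU ⊕ B_{β_τ}, where G(A,τ) = ∫₀^τ e^{A(τ−s)} ds, β_τ = (e^{τ‖A‖} − 1 − τ‖A‖)·‖A‖^{−1}·max_{u∈U}‖u‖, and B_β is the closed sup-norm ball of radius β. -/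

import Mathlib

open Pointwise MeasureTheory

/-! Variation of constants gives
`x(τ) = e^{τA}x₀ + ∫₀^τ e^{(τ-s)A} b ds + ∫₀^τ u + ∫₀^τ (e^{(τ-s)A} - 1) u(s) ds`.
The third term is `τ` times the mean of `u` over `[0, τ]`, which lies in the closed convex set `U`.
The last term is bounded pointwise through `‖e^B - 1‖ ≤ e^{‖B‖} - 1`, and
`∫₀^τ (e^{(τ-s)‖A‖} - 1) ds = (e^{τ‖A‖} - 1 - τ‖A‖)/‖A‖`. -/

open Set NormedSpace

open scoped Interval

section BanachAlgebra

variable {𝔸 : Type*} [NormedRing 𝔸] [NormedAlgebra ℝ 𝔸] [CompleteSpace 𝔸]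

theorem norm_exp_sub_one_le (a : 𝔸) : ‖exp a - 1‖ ≤ Real.exp ‖a‖ - 1 := by
  have hsum : HasSum (fun k : ℕ => ((k + 1).factorial⁻¹ : ℝ) • a ^ (k + 1)) (exp a - 1) := by
    simpa using (hasSum_nat_add_iff' 1).2 (exp_series_hasSum_exp' (𝕂 := ℝ) a)
  have hsum_norm : HasSum (fun k : ℕ => ((k + 1).factorial⁻¹ : ℝ) * ‖a‖ ^ (k + 1))
      (Real.exp ‖a‖ - 1) := by
    simpa [Real.exp_eq_exp_ℝ] using (hasSum_nat_add_iff' 1).2 (exp_series_hasSum_exp' (𝕂 := ℝ) ‖a‖)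
  refine hsum.norm_le_of_bounded hsum_norm fun k => ?_
  rw [norm_smul, Real.norm_of_nonneg (by positivity)]
  exact mul_le_mul_of_nonneg_left (norm_pow_le' a k.succ_pos) (by positivity)

theorem continuous_exp_smul (a : 𝔸) : Continuous fun t : ℝ => exp (t • a) :=
  continuous_iff_continuousAt.2 fun t => (hasDerivAt_exp_smul_const a t).continuousAt

end BanachAlgebra

theorem IntervalIntegrable.clm_apply_of_continuousOn {E F : Type*} [NormedAddCommGroup E]
    [NormedSpace ℝ E] [NormedAddCommGroup F] [NormedSpace ℝ F] {μ : Measure ℝ}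
    {Φ : ℝ → E →L[ℝ] F} {f : ℝ → E} {a b : ℝ} (hΦ : ContinuousOn Φ [[a, b]])
    (hf : IntervalIntegrable f μ a b) : IntervalIntegrable (fun s => Φ s (f s)) μ a b := by
  rw [intervalIntegrable_iff] at hf ⊢
  obtain ⟨C, hC⟩ := isCompact_uIcc.exists_bound_of_continuousOn hΦ
  exact (ContinuousLinearMap.id ℝ _).integrable_of_bilin_of_bdd_left C
    ((hΦ.mono uIoc_subset_uIcc).aestronglyMeasurable measurableSet_uIoc)
    (ae_restrict_of_forall_mem measurableSet_uIoc fun s hs => hC s (uIoc_subset_uIcc hs)) hf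

theorem Convex.intervalIntegral_mem_smul {E : Type*} [NormedAddCommGroup E] [NormedSpace ℝ E]
    [CompleteSpace E] {U : Set E} (hU : Convex ℝ U) (hUc : IsClosed U) {u : ℝ → E} {a b : ℝ}
    (hab : a < b) (hu : IntervalIntegrable u volume a b) (huU : ∀ s ∈ Ioc a b, u s ∈ U) :
    ∫ s in a..b, u s ∈ (b - a) • U := by
  have hvol : volume.real (Ioc a b) = b - a := Real.volume_real_Ioc_of_le hab.le
  refine ⟨⨍ s in Ioc a b, u s, hU.set_average_mem hUc ?_ measure_Ioc_lt_top.ne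
    (ae_restrict_of_forall_mem measurableSet_Ioc huU) hu.1, ?_⟩
  · simpa [Real.volume_Ioc] using hab
  · change (b - a) • _ = _
    rw [setAverage_eq, hvol, smul_inv_smul₀ (sub_ne_zero.2 hab.ne'),
      intervalIntegral.integral_of_le hab.le]

theorem integral_exp_mul_sub_one (τ : ℝ) {c : ℝ} (hc : c ≠ 0) :
    ∫ s in (0 : ℝ)..τ, (Real.exp ((τ - s) * c) - 1) = (Real.exp (τ * c) - 1 - τ * c) * c⁻¹ := by
  rw [intervalIntegral.integral_comp_sub_left (fun s => Real.exp (s * c) - 1), sub_self, sub_zero,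
    intervalIntegral.integral_sub, intervalIntegral.integral_comp_mul_right Real.exp hc, integral_exp]
  · simp only [zero_mul, Real.exp_zero, smul_eq_mul, intervalIntegral.integral_const, sub_zero,
      mul_one]
    field_simp
  · exact (Real.continuous_exp.comp (continuous_mul_const c)).intervalIntegrable _ _
  · exact intervalIntegrable_const

section LinearODE

variable {E : Type*} [NormedAddCommGroup E] [NormedSpace ℝ E] [CompleteSpace E]

theorem hasDerivAt_exp_sub_smul_apply {A : E →L[ℝ] E} {x : ℝ → E} {v : E} {t s : ℝ}
    (hx : HasDerivAt x (A (x s) + v) s) :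
    HasDerivAt (fun r => exp ((t - r) • A) (x r)) (exp ((t - s) • A) v) s := by
  have hexp : HasDerivAt (fun r : ℝ => exp ((t - r) • A)) (-(exp ((t - s) • A) * A)) s := by
    simpa [Function.comp_def] using
      (hasDerivAt_exp_smul_const A (t - s)).scomp s ((hasDerivAt_id s).const_sub t)
  convert hexp.clm_apply hx using 1
  simp

theorem eq_exp_smul_apply_add_integral_of_hasDerivAt {A : E →L[ℝ] E} {x f : ℝ → E} {a b : ℝ}
    (hf : IntervalIntegrable f volume a b)
    (hx : ∀ s ∈ uIcc a b, HasDerivAt x (A (x s) + f s) s) :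
    x b = exp ((b - a) • A) (x a) + ∫ s in a..b, exp ((b - s) • A) (f s) := by
  have hint : IntervalIntegrable (fun s => exp ((b - s) • A) (f s)) volume a b :=
    hf.clm_apply_of_continuousOn
      ((continuous_exp_smul A).comp (continuous_const.sub continuous_id)).continuousOn
  rw [intervalIntegral.integral_eq_sub_of_hasDerivAt
    (fun s hs => hasDerivAt_exp_sub_smul_apply (hx s hs)) hint]
  simp

theorem integral_exp_sub_smul_apply_const_add (A : E →L[ℝ] E) (c : E) {u : ℝ → E} {a b : ℝ}
    (hu : IntervalIntegrable u volume a b) :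
    ∫ s in a..b, exp ((b - s) • A) (c + u s) = (∫ s in a..b, exp ((b - s) • A) c) +
      (∫ s in a..b, u s) + ∫ s in a..b, (exp ((b - s) • A) - 1) (u s) := by
  have hcont : Continuous fun s : ℝ => exp ((b - s) • A) :=
    (continuous_exp_smul A).comp (continuous_const.sub continuous_id)
  have hconst : IntervalIntegrable (fun s => exp ((b - s) • A) c) volume a b :=
    (hcont.clm_apply continuous_const).intervalIntegrable a b
  have hrem : IntervalIntegrable (fun s => (exp ((b - s) • A) - 1) (u s)) volume a b :=
    hu.clm_apply_of_continuousOn (hcont.sub continuous_const).continuousOn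
  rw [← intervalIntegral.integral_add hconst hu,
    ← intervalIntegral.integral_add (hconst.add hu) hrem]
  congr 1 with s
  simp

theorem norm_integral_exp_sub_smul_sub_one_apply_le {A : E →L[ℝ] E} (hA : 0 < ‖A‖)
    {u : ℝ → E} {τ M : ℝ} (hτ : 0 ≤ τ) (hu : ∀ s ∈ Ioc 0 τ, ‖u s‖ ≤ M) :
    ‖∫ s in (0 : ℝ)..τ, (exp ((τ - s) • A) - 1) (u s)‖ ≤
      (Real.exp (τ * ‖A‖) - 1 - τ * ‖A‖) * ‖A‖⁻¹ * M := by
  have hpointwise : ∀ s ∈ Ioc 0 τ,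
      ‖(exp ((τ - s) • A) - 1) (u s)‖ ≤ (Real.exp ((τ - s) * ‖A‖) - 1) * M := by
    intro s hs
    have hs' : 0 ≤ τ - s := sub_nonneg.2 hs.2
    calc ‖(exp ((τ - s) • A) - 1) (u s)‖ ≤ ‖exp ((τ - s) • A) - 1‖ * ‖u s‖ :=
          (exp ((τ - s) • A) - 1).le_opNorm _
      _ ≤ (Real.exp ((τ - s) * ‖A‖) - 1) * M := by
        refine mul_le_mul ?_ (hu s hs) (norm_nonneg _)
          (sub_nonneg.2 (Real.one_le_exp (by positivity)))
        rw [← norm_smul_of_nonneg hs']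
        exact norm_exp_sub_one_le _
  calc ‖∫ s in (0 : ℝ)..τ, (exp ((τ - s) • A) - 1) (u s)‖
      ≤ ∫ s in (0 : ℝ)..τ, (Real.exp ((τ - s) * ‖A‖) - 1) * M :=
        intervalIntegral.norm_integral_le_of_norm_le hτ (ae_of_all _ hpointwise)
          (Continuous.intervalIntegrable (by fun_prop) _ _)
    _ = (Real.exp (τ * ‖A‖) - 1 - τ * ‖A‖) * ‖A‖⁻¹ * M := by
        rw [intervalIntegral.integral_mul_const, integral_exp_mul_sub_one τ hA.ne']

end LinearODE

theorem stmt16_general (n : ℕ) (A : (Fin n → ℝ) →L[ℝ] (Fin n → ℝ)) (hA : 0 < ‖A‖)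
    (b : Fin n → ℝ) (U X₀ : Set (Fin n → ℝ))
    (hUc : IsCompact U) (hUconv : Convex ℝ U)
    (τ : ℝ) (hτ : 0 < τ) (u : ℝ → (Fin n → ℝ))
    (humeas : AEStronglyMeasurable u (volume.restrict (Set.Icc 0 τ)))
    (huU : ∀ s ∈ Set.Icc (0 : ℝ) τ, u s ∈ U)
    (x₀ : Fin n → ℝ) (hx₀ : x₀ ∈ X₀) (x : ℝ → (Fin n → ℝ)) (hx0 : x 0 = x₀)
    (hode : ∀ s ∈ Set.Icc (0 : ℝ) τ, HasDerivAt x (A (x s) + b + u s) s) :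
    x τ ∈ (fun y => (NormedSpace.exp (τ • A)) y) '' X₀ +
        {∫ s in (0 : ℝ)..τ, (NormedSpace.exp ((τ - s) • A)) b} +
        (fun v => τ • v) '' U +
        {z : Fin n → ℝ |
          ‖z‖ ≤ (Real.exp (τ * ‖A‖) - 1 - τ * ‖A‖) * ‖A‖⁻¹ * sSup (norm '' U)} := by
  have huU' : ∀ s ∈ Ioc 0 τ, u s ∈ U := fun s hs => huU s (Ioc_subset_Icc_self hs)
  have hu_le : ∀ s ∈ Ioc 0 τ, ‖u s‖ ≤ sSup (norm '' U) := fun s hs =>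
    le_csSup (hUc.image continuous_norm).bddAbove (mem_image_of_mem _ (huU' s hs))
  have hu : IntervalIntegrable u volume 0 τ := by
    rw [intervalIntegrable_iff_integrableOn_Ioc_of_le hτ.le]
    exact Integrable.of_bound (humeas.mono_set Ioc_subset_Icc_self) _
      (ae_restrict_of_forall_mem measurableSet_Ioc hu_le)
  have hsol : x τ = exp (τ • A) x₀ + ∫ s in (0 : ℝ)..τ, exp ((τ - s) • A) (b + u s) := by
    have := eq_exp_smul_apply_add_integral_of_hasDerivAt (intervalIntegrable_const.add hu)
      fun s hs => by simpa only [add_assoc] using hode s (uIcc_of_le hτ.le ▸ hs)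
    rwa [hx0, sub_zero] at this
  obtain ⟨v, hvU, hv⟩ :=
    hUconv.intervalIntegral_mem_smul hUc.isClosed hτ hu huU'
  rw [hsol, integral_exp_sub_smul_apply_const_add A b hu, ← add_assoc, ← add_assoc]
  refine add_mem_add (add_mem_add (add_mem_add (mem_image_of_mem _ hx₀) rfl) ⟨v, hvU, ?_⟩)
    (norm_integral_exp_sub_smul_sub_one_apply_le hA hτ.le hu_le)
  simpa using hv

/-- One-step reachable-set over-approximation for the affine system `ẋ = Ax + b + u(t)`:
`x(τ) ∈ e^{Aτ}X₀ ⊕ {G(A,τ)b} ⊕ τU ⊕ B_{β_τ}` with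
`β_τ = (e^{τ‖A‖} − 1 − τ‖A‖)‖A‖⁻¹ max_{u∈U}‖u‖`. -/
theorem stmt16 (n : ℕ) (A : (Fin n → ℝ) →L[ℝ] (Fin n → ℝ)) (hA : 0 < ‖A‖)
    (b : Fin n → ℝ) (U X₀ : Set (Fin n → ℝ))
    (hUc : IsCompact U) (hUconv : Convex ℝ U)
    (hX₀c : IsCompact X₀) (hX₀conv : Convex ℝ X₀)
    (τ : ℝ) (hτ : 0 < τ) (u : ℝ → (Fin n → ℝ))
    (humeas : AEStronglyMeasurable u (volume.restrict (Set.Icc 0 τ)))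
    (huU : ∀ s ∈ Set.Icc (0 : ℝ) τ, u s ∈ U)
    (x₀ : Fin n → ℝ) (hx₀ : x₀ ∈ X₀) (x : ℝ → (Fin n → ℝ)) (hx0 : x 0 = x₀)
    (hode : ∀ s ∈ Set.Icc (0 : ℝ) τ, HasDerivAt x (A (x s) + b + u s) s) :
    x τ ∈ (fun y => (NormedSpace.exp (τ • A)) y) '' X₀ +
        {∫ s in (0 : ℝ)..τ, (NormedSpace.exp ((τ - s) • A)) b} +
        (fun v => τ • v) '' U +
        {z : Fin n → ℝ |
          ‖z‖ ≤ (Real.exp (τ * ‖A‖) - 1 - τ * ‖A‖) * ‖A‖⁻¹ * sSup (norm '' U)} :=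
  stmt16_general n A hA b U X₀ hUc hUconv τ hτ u humeas huU x₀ hx₀ x hx0 hode
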